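/- Fix τ₁ < τ₂ and R > 0. There exists c_J > 0 such that for all (r, g) ∈ [-R, R]², the Jacobian matrix J of the two-anchor map Γ(r,g) = (Φ((r-τ₁)e^{-g}), Φ((r-τ₂)e^{-g})) satisfies JᵀJ ⪰ c_J·I₂ (i.e., the smallest eigenvalue of JᵀJ is at least c_J). -/

import Mathlib

/-!
The Jacobian of `Γ` at `(r, g)` has rows `φ(uᵢ) · (e^{-g}, -uᵢ)` with `uᵢ = (r - τᵢ) e^{-g}`,
so its determinant is `φ(u₁) φ(u₂) e^{-2g} (τ₂ - τ₁)`, which never vanishes. For a `2 × 2`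
matrix `J`, `‖J v‖² ≥ (det J)² / ‖J‖_F² · ‖v‖²`, and the right-hand ratio is continuous in
`(r, g)`, hence bounded below by a positive constant on the compact square `[-R, R]²`.
-/

open Set

noncomputable def stdGaussianPDF (t : ℝ) : ℝ :=
  (Real.sqrt (2 * Real.pi))⁻¹ * Real.exp (-t ^ 2 / 2)

noncomputable def stdGaussianCDF (x : ℝ) : ℝ :=
  ∫ t in Set.Iic x, stdGaussianPDF t

/-- The two-anchor map `Γ(r,g) = (Φ((r-τ₁)e^{-g}), Φ((r-τ₂)e^{-g}))`. -/
noncomputable def twoAnchorMap (τ₁ τ₂ : ℝ) (p : ℝ × ℝ) : ℝ × ℝ :=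
  (stdGaussianCDF ((p.1 - τ₁) * Real.exp (-p.2)),
   stdGaussianCDF ((p.1 - τ₂) * Real.exp (-p.2)))

theorem sq_det_mul_le_sum_sq_mul (a b c d x y : ℝ) :
    (a * d - b * c) ^ 2 * (x ^ 2 + y ^ 2) ≤
      (a ^ 2 + b ^ 2 + c ^ 2 + d ^ 2) * ((a * x + b * y) ^ 2 + (c * x + d * y) ^ 2) := by
  nlinarith [sq_nonneg (b * (a * x + b * y) + d * (c * x + d * y)),
    sq_nonneg (a * (a * x + b * y) + c * (c * x + d * y)),
    sq_nonneg (d * (a * x + b * y) - b * (c * x + d * y)),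
    sq_nonneg (a * (c * x + d * y) - c * (a * x + b * y))]

theorem sum_sq_pos_of_det_ne_zero {a b c d : ℝ} (h : a * d - b * c ≠ 0) :
    0 < a ^ 2 + b ^ 2 + c ^ 2 + d ^ 2 := by
  by_contra! hle
  obtain ⟨rfl, rfl, rfl, rfl⟩ : a = 0 ∧ b = 0 ∧ c = 0 ∧ d = 0 := by
    refine ⟨?_, ?_, ?_, ?_⟩ <;> nlinarith [sq_nonneg a, sq_nonneg b, sq_nonneg c, sq_nonneg d]
  simp at h

theorem IsCompact.exists_pos_mul_sum_sq_le {X : Type*} [TopologicalSpace X] {K : Set X}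
    (hK : IsCompact K) {a b c d : X → ℝ} (ha : ContinuousOn a K) (hb : ContinuousOn b K)
    (hc : ContinuousOn c K) (hd : ContinuousOn d K)
    (hdet : ∀ x ∈ K, a x * d x - b x * c x ≠ 0) :
    ∃ κ > 0, ∀ x ∈ K, ∀ v w : ℝ,
      κ * (v ^ 2 + w ^ 2) ≤ (a x * v + b x * w) ^ 2 + (c x * v + d x * w) ^ 2 := by
  rcases K.eq_empty_or_nonempty with rfl | hne
  · exact ⟨1, one_pos, by simp⟩
  set F : X → ℝ := fun x ↦ a x ^ 2 + b x ^ 2 + c x ^ 2 + d x ^ 2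
  have hF : ∀ x ∈ K, 0 < F x := fun x hx ↦ sum_sq_pos_of_det_ne_zero (hdet x hx)
  have hcont : ContinuousOn (fun x ↦ (a x * d x - b x * c x) ^ 2 / F x) K :=
    (((ha.mul hd).sub (hb.mul hc)).pow 2).div
      ((((ha.pow 2).add (hb.pow 2)).add (hc.pow 2)).add (hd.pow 2)) fun x hx ↦ (hF x hx).ne'
  obtain ⟨x₀, hx₀, hmin⟩ := hK.exists_isMinOn hne hcont
  refine ⟨_, div_pos (sq_pos_of_ne_zero (hdet x₀ hx₀)) (hF x₀ hx₀), fun x hx v w ↦ ?_⟩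
  calc (a x₀ * d x₀ - b x₀ * c x₀) ^ 2 / F x₀ * (v ^ 2 + w ^ 2)
      ≤ (a x * d x - b x * c x) ^ 2 / F x * (v ^ 2 + w ^ 2) :=
        mul_le_mul_of_nonneg_right (hmin hx) (by positivity)
    _ ≤ (a x * v + b x * w) ^ 2 + (c x * v + d x * w) ^ 2 := by
      rw [div_mul_eq_mul_div, div_le_iff₀' (hF x hx)]
      exact sq_det_mul_le_sum_sq_mul ..

theorem hasDerivAt_integral_Iic {E : Type*} [NormedAddCommGroup E] [NormedSpace ℝ E]
    [CompleteSpace E] {f : ℝ → E} (hf : MeasureTheory.Integrable f) (hcont : Continuous f)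
    (x : ℝ) : HasDerivAt (fun y ↦ ∫ t in Iic y, f t) (f x) x := by
  have hsplit : (fun y ↦ ∫ t in Iic y, f t) =
      fun y ↦ (∫ t in Iic 0, f t) + ∫ t in (0 : ℝ)..y, f t := funext fun y ↦
    (add_sub_cancel _ _).symm.trans
      (congrArg _ (intervalIntegral.integral_Iic_sub_Iic hf.integrableOn hf.integrableOn))
  rw [hsplit]
  exact (intervalIntegral.integral_hasDerivAt_right hf.intervalIntegrable
    (hcont.stronglyMeasurableAtFilter _ _) hcont.continuousAt).const_add _

theorem continuous_stdGaussianPDF : Continuous stdGaussianPDF := by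
  unfold stdGaussianPDF; fun_prop

theorem stdGaussianPDF_pos (t : ℝ) : 0 < stdGaussianPDF t := by
  unfold stdGaussianPDF; positivity

theorem integrable_stdGaussianPDF : MeasureTheory.Integrable stdGaussianPDF := by
  have h := (integrable_exp_neg_mul_sq (b := 1 / 2) (by norm_num)).const_mul
    (Real.sqrt (2 * Real.pi))⁻¹
  refine h.congr (.of_forall fun t ↦ ?_)
  simp only [stdGaussianPDF]
  ring_nf

theorem hasDerivAt_stdGaussianCDF (x : ℝ) : HasDerivAt stdGaussianCDF (stdGaussianPDF x) x :=
  hasDerivAt_integral_Iic integrable_stdGaussianPDF continuous_stdGaussianPDF x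

theorem hasFDerivAt_stdGaussianCDF_anchor (τ : ℝ) (p : ℝ × ℝ) :
    HasFDerivAt (fun q : ℝ × ℝ ↦ stdGaussianCDF ((q.1 - τ) * Real.exp (-q.2)))
      (stdGaussianPDF ((p.1 - τ) * Real.exp (-p.2)) •
        (Real.exp (-p.2) • ContinuousLinearMap.fst ℝ ℝ ℝ -
          ((p.1 - τ) * Real.exp (-p.2)) • ContinuousLinearMap.snd ℝ ℝ ℝ)) p := by
  have hinner := (hasFDerivAt_fst.sub_const τ).mul (hasFDerivAt_snd (p := p)).neg.exp
  refine (hasDerivAt_stdGaussianCDF _).comp_hasFDerivAt p (hinner.congr_fderiv ?_)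
  ext <;> simp

theorem twoAnchorMap_fderiv_apply (τ₁ τ₂ r g : ℝ) (v : ℝ × ℝ) :
    fderiv ℝ (twoAnchorMap τ₁ τ₂) (r, g) v =
      (stdGaussianPDF ((r - τ₁) * Real.exp (-g)) *
        (Real.exp (-g) * v.1 - (r - τ₁) * Real.exp (-g) * v.2),
       stdGaussianPDF ((r - τ₂) * Real.exp (-g)) *
        (Real.exp (-g) * v.1 - (r - τ₂) * Real.exp (-g) * v.2)) := by
  have h : HasFDerivAt (twoAnchorMap τ₁ τ₂) _ (r, g) :=
    (hasFDerivAt_stdGaussianCDF_anchor τ₁ _).prodMk (hasFDerivAt_stdGaussianCDF_anchor τ₂ _)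
  rw [h.fderiv]
  simp [mul_sub]

theorem two_anchor_jacobian_nondegenerate_general (τ₁ τ₂ R : ℝ) (hτ : τ₁ < τ₂) :
    ∃ cJ > 0, ∀ r g : ℝ, |r| ≤ R → |g| ≤ R → ∀ v : ℝ × ℝ,
      cJ * (v.1 ^ 2 + v.2 ^ 2)
        ≤ ((fderiv ℝ (twoAnchorMap τ₁ τ₂) (r, g) v).1) ^ 2
          + ((fderiv ℝ (twoAnchorMap τ₁ τ₂) (r, g) v).2) ^ 2 := by
  set e : ℝ × ℝ → ℝ := fun p ↦ Real.exp (-p.2)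
  set u : ℝ → ℝ × ℝ → ℝ := fun τ p ↦ (p.1 - τ) * e p
  set φ : ℝ → ℝ × ℝ → ℝ := fun τ p ↦ stdGaussianPDF (u τ p)
  have hφ : ∀ τ, Continuous (φ τ) := fun τ ↦ continuous_stdGaussianPDF.comp (by fun_prop)
  have hdet : ∀ p, φ τ₁ p * e p * -(φ τ₂ p * u τ₂ p) - -(φ τ₁ p * u τ₁ p) * (φ τ₂ p * e p) =
      φ τ₁ p * φ τ₂ p * e p ^ 2 * (τ₂ - τ₁) := fun p ↦ by ring
  obtain ⟨κ, hκ, hJ⟩ := (isCompact_Icc.prod isCompact_Icc).exists_pos_mul_sum_sq_le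
    (K := Icc (-R) R ×ˢ Icc (-R) R) (a := fun p ↦ φ τ₁ p * e p) (b := fun p ↦ -(φ τ₁ p * u τ₁ p))
    (c := fun p ↦ φ τ₂ p * e p) (d := fun p ↦ -(φ τ₂ p * u τ₂ p))
    (by fun_prop) (by fun_prop) (by fun_prop) (by fun_prop) fun p _ ↦ by
      rw [hdet]
      exact (mul_pos (mul_pos (mul_pos (stdGaussianPDF_pos _) (stdGaussianPDF_pos _))
        (by positivity)) (sub_pos.2 hτ)).ne'
  refine ⟨κ, hκ, fun r g hr hg v ↦ ?_⟩
  rw [twoAnchorMap_fderiv_apply]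
  convert hJ (r, g) ⟨abs_le.mp hr, abs_le.mp hg⟩ v.1 v.2 using 3 <;> ring

/-- Uniform nondegeneracy of the Jacobian of the two-anchor map on a bounded set:
`JᵀJ ⪰ c_J I₂`, expressed as `‖J v‖₂² ≥ c_J ‖v‖₂²` for all `v`. -/
theorem two_anchor_jacobian_nondegenerate (τ₁ τ₂ R : ℝ) (hτ : τ₁ < τ₂) (hR : 0 < R) :
    ∃ cJ > 0, ∀ r g : ℝ, |r| ≤ R → |g| ≤ R → ∀ v : ℝ × ℝ,
      cJ * (v.1 ^ 2 + v.2 ^ 2)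
        ≤ ((fderiv ℝ (twoAnchorMap τ₁ τ₂) (r, g) v).1) ^ 2
          + ((fderiv ℝ (twoAnchorMap τ₁ τ₂) (r, g) v).2) ^ 2 :=
  two_anchor_jacobian_nondegenerate_general τ₁ τ₂ R hτ
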